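/- Let X ≥ 2, let B be an n×n matrix with integer entries in {0,…,X}, and let G_B be its weighted grid embedding. Form a graph H by adding a new vertex t and, for each 1 ≤ k ≤ n, an edge (b_k, t) of weight A_k, where A_1,…,A_n are integers in {0,…,X}. Then for every 1 ≤ j ≤ n, the shortest-path distance from a_j to t in H equals X²·(2n·(n−j+1) + 2j − 1) + B_{1,j} + A_1; that is, the dominant term is minimized at k = 1 and the shortest a_j–t path passes through b_1 regardless of the values of A and B. -/

import Mathlib

/-!
Lower bounds come from feasible potentials: if `φ p ≤ w(p, q) + φ q` on every edge and `φ t = 0`,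
then `φ s ≤ d(s, t)`. The distance to `t` splits as `X² ψ + δ`, where `ψ` is the distance in the
unperturbed grid (from `u i c` it is `2n (n - c + 1)`, going right along row `i`) and
`δ ≤ B i c + A i ≤ 2X ≤ X²` collects the perturbations; as `δ` never exceeds `X²`, each edge
condition for `X² ψ + δ` is a lexicographic comparison. The walk
`a j, v 1 j, x 1 j, w 1 j, u 1 (j+1), …, w 1 n, b 1, t` attains the bound. A walk avoiding `b 1`
must leave row 1 downwards through some `(u 1 c, v 2 c)`, of weight `(2c - 1) X²`; a second
potential shows that this costs at least `2j X² > B 1 j + A 1` extra.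
-/

/-- Vertices of the grid embedding: `a j` (top terminals), `b i` (right terminals),
`u i j` (grid intersections), `v i j` (subdivision vertex above `u i j`),
`w i j` (subdivision vertex to the right of `u i j`), `x i j` (shortcut vertices).
Indices are 1-based natural numbers; out-of-range vertices are isolated. -/
inductive GV : Type
  | a (j : ℕ)
  | b (i : ℕ)
  | u (i j : ℕ)
  | v (i j : ℕ)
  | w (i j : ℕ)
  | x (i j : ℕ)
deriving DecidableEq

/-- One-directional edge weights of the grid embedding of a boolean `R × C` matrix `M`;
`⊤` means "no edge". -/
def dirW (R C : ℕ) (M : ℕ → ℕ → Bool) : GV → GV → ℕ∞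
  | GV.a j, GV.v i' j' =>
      if i' = 1 ∧ j' = j ∧ 1 ≤ j ∧ j ≤ C then ((2 * j - 1 : ℕ) : ℕ∞) else ⊤
  | GV.v i j, GV.u i' j' =>
      if i' = i ∧ j' = j ∧ 1 ≤ i ∧ i ≤ R ∧ 1 ≤ j ∧ j ≤ C then 1 else ⊤
  | GV.u i j, GV.v i' j' =>
      if i' = i + 1 ∧ j' = j ∧ 1 ≤ i ∧ i + 1 ≤ R ∧ 1 ≤ j ∧ j ≤ C then
        ((2 * j - 1 : ℕ) : ℕ∞) else ⊤
  | GV.u i j, GV.w i' j' =>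
      if i' = i ∧ j' = j ∧ 1 ≤ i ∧ i ≤ R ∧ 1 ≤ j ∧ j ≤ C then 2 else ⊤
  | GV.w i j, GV.u i' j' =>
      if i' = i ∧ j' = j + 1 ∧ 1 ≤ i ∧ i ≤ R ∧ 1 ≤ j ∧ j + 1 ≤ C then
        ((2 * R - 2 : ℕ) : ℕ∞) else ⊤
  | GV.w i j, GV.b i' =>
      if i' = i ∧ j = C ∧ 1 ≤ i ∧ i ≤ R ∧ 1 ≤ C then ((2 * R - 2 : ℕ) : ℕ∞) else ⊤
  | GV.v i j, GV.x i' j' =>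
      if i' = i ∧ j' = j ∧ M i j = true ∧ 1 ≤ i ∧ i ≤ R ∧ 1 ≤ j ∧ j ≤ C then 1 else ⊤
  | GV.x i j, GV.w i' j' =>
      if i' = i ∧ j' = j ∧ M i j = true ∧ 1 ≤ i ∧ i ≤ R ∧ 1 ≤ j ∧ j ≤ C then 1 else ⊤
  | _, _ => ⊤

/-- Symmetrization of a one-directional weight function. -/
noncomputable def symW {V : Type} (f : V → V → ℕ∞) : V → V → ℕ∞ := fun p q => min (f p q) (f q p)

/-- Edge weights of the grid embedding of a boolean matrix `M`. -/
noncomputable def gridW (R C : ℕ) (M : ℕ → ℕ → Bool) : GV → GV → ℕ∞ := symW (dirW R C M)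

/-- One-directional edge weights of the weighted grid embedding of an `R × C` matrix `M`
with entries in `{0, …, X}`: the grid embedding of the all-ones boolean matrix with every
weight multiplied by `X²`, and the weight of each edge `(v i j, x i j)` increased by `M i j`. -/
def dirWt (R C X : ℕ) (M : ℕ → ℕ → ℕ) : GV → GV → ℕ∞ := fun p q =>
  (X : ℕ∞) ^ 2 * dirW R C (fun _ _ => true) p q +
    (match p, q with
      | GV.v i j, GV.x i' j' => if i' = i ∧ j' = j then (M i j : ℕ∞) else 0
      | _, _ => 0)

/-- Edge weights of the weighted grid embedding of `M`. -/
noncomputable def wgridW (R C X : ℕ) (M : ℕ → ℕ → ℕ) : GV → GV → ℕ∞ := symW (dirWt R C X M)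

/-- Edge weights of the mirrored grid `G'`: the (weighted, scaled by `X²`) grid embedding
with all shortcut vertices removed.  Mirroring is a weight-preserving graph isomorphism, so
the mirrored copy is represented by the same abstract graph. -/
noncomputable def mirW (R C X : ℕ) : GV → GV → ℕ∞ :=
  fun p q => (X : ℕ∞) ^ 2 * gridW R C (fun _ _ => false) p q

/-- Total weight of a walk, given as its list of visited vertices. -/
def cost {V : Type} (W : V → V → ℕ∞) : List V → ℕ∞
  | p :: q :: l => W p q + cost W (q :: l)
  | _ => 0

/-- Shortest-path distance: the least total weight of a walk from `s` to `t`
(`⊤` if there is none; walks through a non-edge have cost `⊤`). -/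
noncomputable def gdist {V : Type} (W : V → V → ℕ∞) (s t : V) : ℕ∞ :=
  sInf {c | ∃ l : List V, l.head? = some s ∧ l.getLast? = some t ∧ cost W l = c}

/-- The graph `H` of Statement 6: the weighted grid embedding of the `n × n` matrix `B`,
together with a new vertex `t` (encoded as `none`) and, for `1 ≤ k ≤ n`, an edge
`(b k, t)` of weight `A k`. -/
noncomputable def hW6 (n X : ℕ) (B : ℕ → ℕ → ℕ) (A : ℕ → ℕ) : Option GV → Option GV → ℕ∞
  | some p, some q => wgridW n n X B p q
  | some (GV.b k), none => if 1 ≤ k ∧ k ≤ n then (A k : ℕ∞) else ⊤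
  | none, some (GV.b k) => if 1 ≤ k ∧ k ≤ n then (A k : ℕ∞) else ⊤
  | _, _ => ⊤


section Walks

variable {V : Type} (W : V → V → ℕ∞)

def IsPotentialOn (S : Set V) (φ : V → ℕ) : Prop :=
  ∀ p ∈ S, ∀ q ∈ S, (φ p : ℕ∞) ≤ W p q + φ q

variable {W}

theorem IsPotentialOn.le_cost_add {S : Set V} {φ : V → ℕ} (hφ : IsPotentialOn W S φ) :
    ∀ {l : List V} {s t : V}, (∀ p ∈ l, p ∈ S) → l.head? = some s → l.getLast? = some t →
      (φ s : ℕ∞) ≤ cost W l + φ t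
  | [], _, _, _, hs, _ => by simp at hs
  | [p], s, t, _, hs, ht => by simp_all [cost]
  | p :: q :: l, s, t, hl, hs, ht => by
    obtain rfl : p = s := by simpa using hs
    have hq : (φ q : ℕ∞) ≤ cost W (q :: l) + φ t :=
      hφ.le_cost_add (fun r hr => hl r (List.mem_cons_of_mem _ hr)) rfl (by simpa using ht)
    calc (φ p : ℕ∞) ≤ W p q + φ q := hφ p (hl p (by simp)) q (hl q (by simp))
      _ ≤ W p q + (cost W (q :: l) + φ t) := by gcongr
      _ = cost W (p :: q :: l) + φ t := by rw [cost, add_assoc]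

theorem IsPotentialOn.le_gdist {φ : V → ℕ} (hφ : IsPotentialOn W Set.univ φ) {s t : V}
    (ht : φ t = 0) : (φ s : ℕ∞) ≤ gdist W s t :=
  le_sInf fun _ ⟨_, hs, hlt, hc⟩ => by
    simpa [ht, hc] using hφ.le_cost_add (fun _ _ => trivial) hs hlt

theorem gdist_self (t : V) : gdist W t t = 0 :=
  nonpos_iff_eq_zero.mp (sInf_le ⟨[t], rfl, rfl, rfl⟩)

theorem gdist_le_add_gdist (p q t : V) : gdist W p t ≤ W p q + gdist W q t := by
  rcases Set.eq_empty_or_nonempty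
      {c | ∃ l : List V, l.head? = some q ∧ l.getLast? = some t ∧ cost W l = c} with h | h
  · simp [gdist, h]
  obtain ⟨_ | ⟨q', l⟩, hq, ht, hc⟩ := csInf_mem h
  · simp at hq
  obtain rfl : q' = q := by simpa using hq
  calc gdist W p t ≤ cost W (p :: q' :: l) :=
        sInf_le ⟨_, rfl, by simpa [List.getLast?_cons_cons] using ht, rfl⟩
    _ = W p q' + gdist W q' t := by rw [cost, hc]; rfl

end Walks

/-- The edges `(p, q)` of the weighted grid embedding of `M`, oriented as in `dirWt`; the edge
has weight `X² ω + β`. -/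
inductive WeightedGridEdge (R C : ℕ) (M : ℕ → ℕ → ℕ) : GV → GV → ℕ → ℕ → Prop
  | av {j} : 1 ≤ j → j ≤ C → WeightedGridEdge R C M (.a j) (.v 1 j) (2 * j - 1) 0
  | vu {i j} : 1 ≤ i → i ≤ R → 1 ≤ j → j ≤ C → WeightedGridEdge R C M (.v i j) (.u i j) 1 0
  | uv {i j} : 1 ≤ i → i + 1 ≤ R → 1 ≤ j → j ≤ C →
      WeightedGridEdge R C M (.u i j) (.v (i + 1) j) (2 * j - 1) 0
  | uw {i j} : 1 ≤ i → i ≤ R → 1 ≤ j → j ≤ C → WeightedGridEdge R C M (.u i j) (.w i j) 2 0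
  | wu {i j} : 1 ≤ i → i ≤ R → 1 ≤ j → j + 1 ≤ C →
      WeightedGridEdge R C M (.w i j) (.u i (j + 1)) (2 * R - 2) 0
  | wb {i} : 1 ≤ i → i ≤ R → 1 ≤ C → WeightedGridEdge R C M (.w i C) (.b i) (2 * R - 2) 0
  | vx {i j} : 1 ≤ i → i ≤ R → 1 ≤ j → j ≤ C → WeightedGridEdge R C M (.v i j) (.x i j) 1 (M i j)
  | xw {i j} : 1 ≤ i → i ≤ R → 1 ≤ j → j ≤ C → WeightedGridEdge R C M (.x i j) (.w i j) 1 0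

section WeightedGrid

variable {R C X : ℕ} {M : ℕ → ℕ → ℕ}

theorem dirWt_eq_top_or_edge (hX : X ≠ 0) (p q : GV) :
    dirWt R C X M p q = ⊤ ∨
      ∃ ω β, WeightedGridEdge R C M p q ω β ∧ dirWt R C X M p q = ((X ^ 2 * ω + β : ℕ) : ℕ∞) := by
  have htop : (X : ℕ∞) ^ 2 * ⊤ = ⊤ := ENat.mul_top (by positivity)
  cases p <;> cases q <;> simp only [dirWt, dirW, htop, top_add, true_or] <;> split_ifs with h <;>
    try simp only [htop, top_add, true_or]
  all_goals
    obtain ⟨rfl, rfl, h⟩ := h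
    first
      | exact absurd ⟨rfl, rfl⟩ ‹¬(_ ∧ _)›
      | exact Or.inr ⟨_, _, by constructor <;> omega, by push_cast; ring⟩

theorem wgridW_of_edge (hX : X ≠ 0) {p q : GV} {ω β : ℕ} (e : WeightedGridEdge R C M p q ω β) :
    wgridW R C X M p q = ((X ^ 2 * ω + β : ℕ) : ℕ∞) := by
  cases e <;> simp [wgridW, symW, dirWt, dirW, *]

end WeightedGrid

section Hgraph

variable {n X : ℕ} {B : ℕ → ℕ → ℕ} {A : ℕ → ℕ}

theorem hW6_some_some (p q : GV) : hW6 n X B A (some p) (some q) = wgridW n n X B p q := by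
  cases p <;> rfl

theorem isPotentialOn_hW6 (hX : X ≠ 0) {S : Set (Option GV)} {φ : Option GV → ℕ}
    (hgrid : ∀ p q ω β, WeightedGridEdge n n B p q ω β → some p ∈ S → some q ∈ S →
      φ (some p) ≤ X ^ 2 * ω + β + φ (some q) ∧ φ (some q) ≤ X ^ 2 * ω + β + φ (some p))
    (hsink : ∀ k, 1 ≤ k → k ≤ n → some (GV.b k) ∈ S → none ∈ S →
      φ (some (GV.b k)) ≤ A k + φ none ∧ φ none ≤ A k + φ (some (GV.b k))) :
    IsPotentialOn (hW6 n X B A) S φ := by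
  have hdir : ∀ p q, some p ∈ S → some q ∈ S →
      (φ (some p) : ℕ∞) ≤ dirWt n n X B p q + φ (some q) ∧
        (φ (some q) : ℕ∞) ≤ dirWt n n X B p q + φ (some p) := by
    intro p q hp hq
    rcases dirWt_eq_top_or_edge hX p q with h | ⟨ω, β, e, h⟩
    · rw [h]; simp
    · rw [h]; exact_mod_cast hgrid p q ω β e hp hq
  rintro (_ | p) hp (_ | q) hq
  · simp [hW6]
  · cases q <;> simp only [hW6, top_add, le_top]
    split_ifs with hk
    · exact_mod_cast (hsink _ hk.1 hk.2 hq hp).2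
    · simp
  · cases p <;> simp only [hW6, top_add, le_top]
    split_ifs with hk
    · exact_mod_cast (hsink _ hk.1 hk.2 hp hq).1
    · simp
  · rw [hW6_some_some, wgridW, symW, ← min_add_add_right]
    exact le_min (hdir p q hp hq).1 (hdir q p hq hp).2

end Hgraph

theorem mul_add_le_of_lex {s a d ω β b e : ℕ} (hd : d ≤ s)
    (h : a < ω + b ∨ a ≤ ω + b ∧ d ≤ β + e) : s * a + d ≤ s * ω + β + (s * b + e) := by
  rcases h with h | ⟨h, _⟩ <;> nlinarith

def rightDist (n c : ℕ) : ℕ := 2 * n * (n - c + 1)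

theorem rightDist_self (n : ℕ) : rightDist n n = 2 * n := by simp [rightDist]

theorem rightDist_eq_succ_add {n c : ℕ} (h : c + 1 ≤ n) :
    rightDist n c = rightDist n (c + 1) + 2 * n := by
  simp only [rightDist, show n - c + 1 = n - (c + 1) + 1 + 1 by omega, Nat.mul_succ]

theorem two_mul_le_rightDist (n c : ℕ) : 2 * n ≤ rightDist n c :=
  Nat.le_mul_of_pos_right _ (by omega)

def sinkDistLead (n : ℕ) : Option GV → ℕ
  | some (.a c) => rightDist n c + 2 * c - 1
  | some (.u _ c) | some (.v _ c) => rightDist n c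
  | some (.w _ c) => rightDist n c - 2
  | some (.x _ c) => rightDist n c - 1
  | some (.b _) | none => 0

def sinkDistLow (B : ℕ → ℕ → ℕ) (A : ℕ → ℕ) : Option GV → ℕ
  | some (.a c) => B 1 c + A 1
  | some (.v i c) => B i c + A i
  | some (.b i) | some (.u i _) | some (.w i _) | some (.x i _) => A i
  | none => 0

section Potentials

variable {n X : ℕ} {B : ℕ → ℕ → ℕ} {A : ℕ → ℕ}

theorem isPotentialOn_sinkDist (hX : 2 ≤ X)
    (hB : ∀ i j, 1 ≤ i → i ≤ n → 1 ≤ j → j ≤ n → B i j ≤ X)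
    (hA : ∀ k, 1 ≤ k → k ≤ n → A k ≤ X) :
    IsPotentialOn (hW6 n X B A) Set.univ
      (fun p => X ^ 2 * sinkDistLead n p + sinkDistLow B A p) := by
  have h2X : 2 * X ≤ X ^ 2 := by nlinarith
  refine isPotentialOn_hW6 (by omega) (fun p q ω β e _ _ => ?_)
    (fun k _ _ _ _ => by simp [sinkDistLead, sinkDistLow])
  have hA2 : ∀ i, 1 ≤ i → i ≤ n → A i ≤ X ^ 2 := fun i hi hin => by
    have := hA i hi hin; omega
  have hBA2 : ∀ i j, 1 ≤ i → i ≤ n → 1 ≤ j → j ≤ n → B i j + A i ≤ X ^ 2 :=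
    fun i j hi hin hj hjn => by have := hA i hi hin; have := hB i j hi hin hj hjn; omega
  cases e with
  | @av j hj hjn =>
    have := hBA2 1 j le_rfl (by omega) hj hjn
    constructor <;> apply mul_add_le_of_lex <;> simp only [sinkDistLead, sinkDistLow] <;> omega
  | @vu i j hi hin hj hjn | @vx i j hi hin hj hjn =>
    have := hBA2 i j hi hin hj hjn; have := two_mul_le_rightDist n j
    constructor <;> apply mul_add_le_of_lex <;> simp only [sinkDistLead, sinkDistLow] <;> omega
  | @uv i j hi hin hj hjn =>
    have := hBA2 (i + 1) j (by omega) hin hj hjn; have := hA2 i hi (by omega)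
    constructor <;> apply mul_add_le_of_lex <;> simp only [sinkDistLead, sinkDistLow] <;> omega
  | @uw i j hi hin hj hjn | @xw i j hi hin hj hjn =>
    have := hA2 i hi hin; have := two_mul_le_rightDist n j
    constructor <;> apply mul_add_le_of_lex <;> simp only [sinkDistLead, sinkDistLow] <;> omega
  | @wu i j hi hin hj hjn =>
    have := hA2 i hi hin; have := rightDist_eq_succ_add hjn
    constructor <;> apply mul_add_le_of_lex <;> simp only [sinkDistLead, sinkDistLow] <;> omega
  | @wb i hi hin hn =>
    have := hA2 i hi hin; have := rightDist_self n
    constructor <;> apply mul_add_le_of_lex <;> simp only [sinkDistLead, sinkDistLow] <;> omega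

theorem mul_le_mul_add_add_mul {s a ω β b : ℕ} (h : a ≤ ω + b) : s * a ≤ s * ω + β + s * b := by
  nlinarith

def avoidDistLead (n : ℕ) : Option GV → ℕ
  | some (.a c) => rightDist n c + 4 * c - 1
  | some (.u i c) => if i = 1 then rightDist n c + 2 * c - 1 else rightDist n c
  | some (.v i c) => if i = 1 then rightDist n c + 2 * c else rightDist n c
  | some (.w i c) => if i = 1 then rightDist n c + 2 * c - 1 else rightDist n c - 2
  | some (.x i c) => if i = 1 then rightDist n c + 2 * c else rightDist n c - 1
  | some (.b _) | none => 0

theorem isPotentialOn_avoidDist (hX : X ≠ 0) :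
    IsPotentialOn (hW6 n X B A) {some (GV.b 1)}ᶜ (fun p => X ^ 2 * avoidDistLead n p) := by
  refine isPotentialOn_hW6 hX (fun p q ω β e _ hq => ?_)
    (fun k _ _ _ _ => by simp [avoidDistLead])
  cases e with
  | av _ _ | vu _ _ _ _ | uv _ _ _ _ =>
    constructor <;> apply mul_le_mul_add_add_mul <;> simp only [avoidDistLead] <;> split_ifs <;>
      omega
  | @uw i j _ _ _ _ | @vx i j _ _ _ _ | @xw i j _ _ _ _ =>
    have := two_mul_le_rightDist n j
    constructor <;> apply mul_le_mul_add_add_mul <;> simp only [avoidDistLead] <;> split_ifs <;>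
      omega
  | @wu i j _ _ _ hjn =>
    have := rightDist_eq_succ_add hjn
    constructor <;> apply mul_le_mul_add_add_mul <;> simp only [avoidDistLead] <;> split_ifs <;>
      omega
  | @wb i _ _ _ =>
    have : i ≠ 1 := by rintro rfl; exact hq rfl
    have := rightDist_self n
    constructor <;> apply mul_le_mul_add_add_mul <;> simp only [avoidDistLead] <;> split_ifs <;>
      omega

end Potentials

section UpperBound

variable {n X : ℕ} {B : ℕ → ℕ → ℕ} {A : ℕ → ℕ}

theorem gdist_hW6_le_of_edge (hX : X ≠ 0) {p q : GV} {ω β : ℕ}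
    (e : WeightedGridEdge n n B p q ω β) {t : Option GV} {d d' : ℕ}
    (hq : gdist (hW6 n X B A) (some q) t ≤ d) (hd : X ^ 2 * ω + β + d ≤ d') :
    gdist (hW6 n X B A) (some p) t ≤ d' :=
  calc gdist (hW6 n X B A) (some p) t
      ≤ hW6 n X B A (some p) (some q) + gdist (hW6 n X B A) (some q) t := gdist_le_add_gdist _ _ _
    _ ≤ ((X ^ 2 * ω + β : ℕ) : ℕ∞) + d := by rw [hW6_some_some, wgridW_of_edge hX e]; gcongr
    _ ≤ d' := by exact_mod_cast hd

theorem gdist_w_one_le (hn : 1 ≤ n) (hX : X ≠ 0) {c : ℕ} (hc : 1 ≤ c) (hcn : c ≤ n) :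
    gdist (hW6 n X B A) (some (GV.w 1 c)) none ≤
      ((X ^ 2 * (rightDist n c - 2) + A 1 : ℕ) : ℕ∞) := by
  induction hcn using Nat.decreasingInduction with
  | self =>
    have hb : gdist (hW6 n X B A) (some (GV.b 1)) none ≤ A 1 :=
      calc _ ≤ hW6 n X B A (some (GV.b 1)) none + gdist (hW6 n X B A) none none :=
            gdist_le_add_gdist _ _ _
        _ = A 1 := by simp [hW6, hn, gdist_self]
    refine gdist_hW6_le_of_edge hX (.wb le_rfl hn hn) hb ?_
    rw [rightDist_self]; omega
  | of_succ c hc' ih =>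
    refine gdist_hW6_le_of_edge hX (.wu le_rfl hn hc hc')
      (gdist_hW6_le_of_edge hX (.uw le_rfl hn (by omega) hc') (ih (by omega)) le_rfl) ?_
    have : rightDist n c - 2 = (2 * n - 2) + 2 + (rightDist n (c + 1) - 2) := by
      have := rightDist_eq_succ_add hc'; have := two_mul_le_rightDist n (c + 1); omega
    rw [this]; apply le_of_eq; ring

theorem gdist_a_le (hn : 1 ≤ n) (hX : X ≠ 0) {j : ℕ} (hj : 1 ≤ j) (hjn : j ≤ n) :
    gdist (hW6 n X B A) (some (GV.a j)) none ≤
      ((X ^ 2 * (rightDist n j + 2 * j - 1) + B 1 j + A 1 : ℕ) : ℕ∞) := by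
  refine gdist_hW6_le_of_edge hX (.av hj hjn)
    (gdist_hW6_le_of_edge hX (.vx le_rfl hn hj hjn)
      (gdist_hW6_le_of_edge hX (.xw le_rfl hn hj hjn) (gdist_w_one_le hn hX hj hjn) le_rfl)
      le_rfl) ?_
  have : rightDist n j + 2 * j - 1 = (2 * j - 1) + 1 + 1 + (rightDist n j - 2) := by
    have := two_mul_le_rightDist n j; omega
  rw [this]; apply le_of_eq; ring

end UpperBound

/-- the faulty first attempt.  In `H`, the shortest-path distance from
`a j` to `t` is `X²·(2n·(n−j+1) + 2j − 1) + B 1 j + A 1`: the dominant term is minimized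
at `k = 1`, and every shortest `a j`–`t` walk passes through `b 1`, regardless of the
values of `A` and `B`. -/
theorem attempt_dist_a_t (n X : ℕ) (hn : 1 ≤ n) (hX : 2 ≤ X)
    (B : ℕ → ℕ → ℕ) (hB : ∀ i j, 1 ≤ i → i ≤ n → 1 ≤ j → j ≤ n → B i j ≤ X)
    (A : ℕ → ℕ) (hA : ∀ k, 1 ≤ k → k ≤ n → A k ≤ X)
    (j : ℕ) (hj1 : 1 ≤ j) (hjn : j ≤ n) :
    gdist (hW6 n X B A) (some (GV.a j)) none =
        ((X ^ 2 * (2 * n * (n - j + 1) + 2 * j - 1) + B 1 j + A 1 : ℕ) : ℕ∞) ∧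
      ∀ l : List (Option GV), l.head? = some (some (GV.a j)) → l.getLast? = some none →
        cost (hW6 n X B A) l = gdist (hW6 n X B A) (some (GV.a j)) none →
        some (GV.b 1) ∈ l := by
  have hX0 : X ≠ 0 := by omega
  have hdist : gdist (hW6 n X B A) (some (GV.a j)) none =
      ((X ^ 2 * (rightDist n j + 2 * j - 1) + B 1 j + A 1 : ℕ) : ℕ∞) := by
    refine le_antisymm (gdist_a_le hn hX0 hj1 hjn) ?_
    simpa [sinkDistLead, sinkDistLow, add_assoc] using
      (isPotentialOn_sinkDist hX hB hA).le_gdist (s := some (GV.a j)) (t := none) rfl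
  refine ⟨hdist, fun l hs ht hl => ?_⟩
  by_contra hb
  have hlow := (isPotentialOn_avoidDist (n := n) (B := B) (A := A) hX0).le_cost_add
    (fun p hp => by rintro rfl; exact hb hp) hs ht
  rw [hl, hdist] at hlow
  simp only [avoidDistLead, mul_zero, Nat.cast_zero, add_zero, Nat.cast_le] at hlow
  have hsplit : rightDist n j + 4 * j - 1 = (rightDist n j + 2 * j - 1) + 2 * j := by omega
  have hBA : B 1 j + A 1 < X ^ 2 * (2 * j) := by
    have := hB 1 j le_rfl hn hj1 hjn; have := hA 1 le_rfl hn
    nlinarith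
  rw [hsplit, Nat.mul_add] at hlow
  omega
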